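/- arXiv:2408.04118 — 5 statements merged into one kernel-verified Lean document; each statement's English description precedes it below -/
import Mathlib

section
/- In a binary matroid, if C₁ and C₂ are distinct circuits with nonempty intersection that form a modular pair, then the symmetric difference C₁ △ C₂ is again a circuit. -/
open Set Function

namespace Matroid

variable {α : Type*}

noncomputable def rk (M : Matroid α) (X : Set α) : ℕ :=
  sSup {n | ∃ I, M.Indep I ∧ I ⊆ X ∧ I.ncard = n}

def Circuit' (M : Matroid α) (C : Set α) : Prop :=
  C ⊆ M.E ∧ ¬ M.Indep C ∧ ∀ D, D ⊂ C → M.Indep D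

def Cocircuit' (M : Matroid α) (C : Set α) : Prop := M✶.Circuit' C

def Hyperplane' (M : Matroid α) (H : Set α) : Prop :=
  M.IsFlat H ∧ H ≠ M.E ∧ ∀ F, M.IsFlat F → H ⊂ F → F = M.E

def contract' (M : Matroid α) (C : Set α) : Matroid α := (M✶.restrict (M.E \ C))✶

def delete' (M : Matroid α) (D : Set α) : Matroid α := M.restrict (M.E \ D)

def IsMinor' (N M : Matroid α) : Prop := ∃ C D, N = (M.contract' C).delete' D

def RepF2 (M : Matroid α) : Prop :=
  ∃ (ι : Type) (f : α → (ι → ZMod 2)),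
    ∀ I : Set α, I ⊆ M.E → (M.Indep I ↔ LinearIndependent (ZMod 2) (fun x : I => f x))

def IsFreeSet (M : Matroid α) {m : ℕ} (F : Fin m → Set α) : Prop :=
  (∀ i, M.IsFlat (F i)) ∧
  Function.Injective (fun I : Finset (Fin m) => M.closure (⋃ i ∈ I, F i)) ∧
  ∀ I J : Finset (Fin m),
    M.closure (⋃ i ∈ I, F i) ∩ M.closure (⋃ i ∈ J, F i) = M.closure (⋃ i ∈ I ∩ J, F i)

def IsCofreeSet (M : Matroid α) {m : ℕ} (F : Fin m → Set α) : Prop :=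
  (∀ i, M.IsFlat (F i)) ∧
  Function.Injective (fun I : Finset (Fin m) => M.E ∩ ⋂ i ∈ I, F i) ∧
  ∀ I J : Finset (Fin m),
    M.closure ((M.E ∩ ⋂ i ∈ I, F i) ∪ (M.E ∩ ⋂ i ∈ J, F i)) = M.E ∩ ⋂ i ∈ I ∩ J, F i

def CoversFlat (M : Matroid α) (F F' : Set α) : Prop :=
  M.IsFlat F ∧ M.IsFlat F' ∧ F ⊂ F' ∧
    ∀ G, M.IsFlat G → F ⊆ G → G ⊆ F' → G = F ∨ G = F'

def IsMinWt (w : α → ℝ) (S : Set α) (x : α) : Prop := x ∈ S ∧ ∀ y ∈ S, w x ≤ w y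

def IsoU24 (N : Matroid α) : Prop :=
  N.E.ncard = 4 ∧ ∀ X ⊆ N.E, (N.Indep X ↔ X.ncard ≤ 2)

def HasU24Minor (M : Matroid α) : Prop := ∃ N, IsMinor' N M ∧ IsoU24 N

end Matroid

noncomputable def Sym2.inc {V : Type*} [DecidableEq V] (e : Sym2 V) : V → ZMod 2 :=
  fun v => if v ∈ e then 1 else 0


/-!
Represent `M` by vectors `f x` over `𝔽₂`. A dependent set then contains a nonempty set whose
vectors sum to zero, and over `𝔽₂` such zero-sum sets are closed under symmetric difference;
in particular `C₁ △ C₂` is one, so it is dependent. If a proper subset of `C₁ △ C₂` were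
dependent, it would contain a third zero-sum set `S`, and `C₁`, `C₂`, `S` would span a cycle
space of dimension three on `C₁ ∪ C₂`: every independent subset of `C₁ ∪ C₂` misses at least
three of its elements, i.e. `r(C₁ ∪ C₂) ≤ |C₁ ∪ C₂| - 3`. But for a modular pair of distinct
circuits the rank formula gives `r(C₁ ∪ C₂) = |C₁| - 1 + |C₂| - 1 - |C₁ ∩ C₂| = |C₁ ∪ C₂| - 2`.
-/

open Set Function
open scoped symmDiff

theorem Finset.sum_symmDiff_eq_add {α V : Type*} [DecidableEq α] [AddCommGroup V]
    [Module (ZMod 2) V] (f : α → V) (A B : Finset α) :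
    ∑ x ∈ A ∆ B, f x = ∑ x ∈ A, f x + ∑ x ∈ B, f x := by
  rw [← Finset.sum_union_inter,
    ← Finset.sum_sdiff (Finset.inter_subset_left.trans Finset.subset_union_left), add_assoc,
    ZModModule.add_self, add_zero, symmDiff_eq_sup_sdiff_inf]
  rfl

theorem Finset.exists_notMem_notMem_of_subset_symmDiff {α : Type*} [DecidableEq α]
    {A B S : Finset α} {a b : α} (hSAB : S ⊆ A ∆ B) (ha : a ∈ S) (hb : b ∈ A ∆ B) (hbS : b ∉ S) :
    ∃ Z ∈ ({A, B, A ∆ S, B ∆ S} : Set (Finset α)), a ∉ Z ∧ b ∉ Z := by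
  have haAB := hSAB ha
  simp only [Set.mem_insert_iff, Set.mem_singleton_iff, exists_eq_or_imp, exists_eq_left,
    Finset.mem_symmDiff] at *
  tauto

theorem Set.ncard_add_card_le_of_disjoint {α : Type*} {I : Set α} {K U : Finset α}
    (hIU : I ⊆ U) (hKU : K ⊆ U) (hIK : Disjoint I K) : I.ncard + K.card ≤ U.card := by
  have := ncard_le_ncard (union_subset hIU (Finset.coe_subset.mpr hKU)) U.finite_toSet
  rwa [ncard_union_eq hIK (U.finite_toSet.subset hIU), ncard_coe_finset, ncard_coe_finset] at this

namespace Matroid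

variable {α : Type*} {M : Matroid α} {C C₁ C₂ I X : Set α}

theorem rk_le_of_forall_indep {k : ℕ} (h : ∀ I, M.Indep I → I ⊆ X → I.ncard ≤ k) :
    M.rk X ≤ k :=
  csSup_le' <| by rintro _ ⟨I, hI, hIX, rfl⟩; exact h I hI hIX

theorem Indep.ncard_le_rk (hX : X.Finite) (hI : M.Indep I) (hIX : I ⊆ X) :
    I.ncard ≤ M.rk X :=
  le_csSup ⟨X.ncard, by rintro _ ⟨J, -, hJX, rfl⟩; exact ncard_le_ncard hJX hX⟩ ⟨I, hI, hIX, rfl⟩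

theorem Indep.rk_eq (hI : M.Indep I) (hfin : I.Finite) : M.rk I = I.ncard :=
  le_antisymm (rk_le_of_forall_indep fun _ _ hJ ↦ ncard_le_ncard hJ hfin)
    (hI.ncard_le_rk hfin subset_rfl)

theorem Circuit'.nonempty (hC : M.Circuit' C) : C.Nonempty :=
  nonempty_iff_ne_empty.mpr fun h ↦ hC.2.1 (h ▸ M.empty_indep)

theorem Circuit'.rk_eq (hC : M.Circuit' C) (hfin : C.Finite) : M.rk C = C.ncard - 1 := by
  refine le_antisymm (rk_le_of_forall_indep fun J hJ hJC ↦ ?_) ?_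
  · have := ncard_lt_ncard (hJC.ssubset_of_ne fun h ↦ hC.2.1 (h ▸ hJ)) hfin
    omega
  · obtain ⟨a, ha⟩ := hC.nonempty
    rw [← ncard_sdiff_singleton_of_mem ha]
    exact (hC.2.2 _ (sdiff_singleton_ssubset.mpr ha)).ncard_le_rk hfin sdiff_subset

theorem Circuit'.rk_union_add_two_eq_ncard (h₁ : M.Circuit' C₁) (h₂ : M.Circuit' C₂)
    (hne : C₁ ≠ C₂) (hfin₁ : C₁.Finite) (hfin₂ : C₂.Finite)
    (hmod : M.rk C₁ + M.rk C₂ = M.rk (C₁ ∪ C₂) + M.rk (C₁ ∩ C₂)) :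
    M.rk (C₁ ∪ C₂) + 2 = (C₁ ∪ C₂).ncard := by
  have hinter : C₁ ∩ C₂ ⊂ C₁ := inter_subset_left.ssubset_of_ne fun h ↦
    h₁.2.1 (h₂.2.2 _ ((inter_eq_left.mp h).ssubset_of_ne hne))
  have hrk₁ := h₁.rk_eq hfin₁
  have hrk₂ := h₂.rk_eq hfin₂
  have hrk := (h₁.2.2 _ hinter).rk_eq (hfin₁.subset hinter.subset)
  have hpos₁ := (ncard_pos hfin₁).mpr h₁.nonempty
  have hpos₂ := (ncard_pos hfin₂).mpr h₂.nonempty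
  have := ncard_union_add_ncard_inter C₁ C₂ hfin₁ hfin₂
  omega

theorem not_indep_of_sum_eq_zero {R V : Type*} [Ring R] [Nontrivial R] [AddCommGroup V]
    [Module R V] {f : α → V} (hf : ∀ I ⊆ M.E, M.Indep I ↔ LinearIndepOn R f I)
    {S : Finset α} (hSE : ↑S ⊆ M.E) (hS : S.Nonempty) (hsum : ∑ x ∈ S, f x = 0) :
    ¬ M.Indep S := by
  rw [hf _ hSE, linearIndepOn_finset_iff]
  intro h
  obtain ⟨a, ha⟩ := hS
  exact one_ne_zero (h (fun _ ↦ (1 : R)) (by simpa using hsum) a ha)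

section Binary

variable {V : Type*} [AddCommGroup V] [Module (ZMod 2) V] {f : α → V}

theorem exists_sum_eq_zero_of_not_indep
    (hf : ∀ I ⊆ M.E, M.Indep I ↔ LinearIndepOn (ZMod 2) f I)
    {T : Set α} (hTE : T ⊆ M.E) (hT : ¬ M.Indep T) :
    ∃ S : Finset α, ↑S ⊆ T ∧ S.Nonempty ∧ ∑ x ∈ S, f x = 0 := by
  rw [hf _ hTE, linearDepOn_iff] at hT
  obtain ⟨l, hlT, hl, hl0⟩ := hT
  refine ⟨l.support, hlT, Finsupp.support_nonempty_iff.mpr hl0, ?_⟩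
  have hone : ∀ c : ZMod 2, c ≠ 0 → c = 1 := by decide
  rwa [Finset.sum_congr rfl fun x hx ↦ by rw [hone _ (Finsupp.mem_support_iff.mp hx), one_smul]]
    at hl

theorem Circuit'.exists_finset_sum_eq_zero
    (hf : ∀ I ⊆ M.E, M.Indep I ↔ LinearIndepOn (ZMod 2) f I) (hC : M.Circuit' C) :
    ∃ S : Finset α, ↑S = C ∧ ∑ x ∈ S, f x = 0 := by
  obtain ⟨S, hSC, hS, hsum⟩ := exists_sum_eq_zero_of_not_indep hf hC.1 hC.2.1
  refine ⟨S, by_contra fun hne ↦ ?_, hsum⟩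
  exact not_indep_of_sum_eq_zero hf (hSC.trans hC.1) hS hsum (hC.2.2 _ (hSC.ssubset_of_ne hne))

theorem Indep.exists_mem_notMem_of_sum_eq_zero
    (hf : ∀ I ⊆ M.E, M.Indep I ↔ LinearIndepOn (ZMod 2) f I) (hI : M.Indep I)
    {Z : Finset α} (hZE : ↑Z ⊆ M.E) (hZ : Z.Nonempty) (hsum : ∑ x ∈ Z, f x = 0) :
    ∃ z ∈ Z, z ∉ I :=
  not_subset.mp fun h ↦ not_indep_of_sum_eq_zero hf hZE hZ hsum (hI.subset h)

theorem Indep.ncard_add_three_le [DecidableEq α]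
    (hf : ∀ I ⊆ M.E, M.Indep I ↔ LinearIndepOn (ZMod 2) f I) (hI : M.Indep I)
    {A B S : Finset α} (hIU : I ⊆ ↑(A ∪ B)) (hAE : ↑A ⊆ M.E) (hBE : ↑B ⊆ M.E)
    (hA : ∑ x ∈ A, f x = 0) (hB : ∑ x ∈ B, f x = 0) (hS : ∑ x ∈ S, f x = 0)
    (hSne : S.Nonempty) (hSAB : S ⊂ A ∆ B) {x : α} (hx : x ∈ A ∩ B) :
    I.ncard + 3 ≤ (A ∪ B).card := by
  obtain ⟨hxA, hxB⟩ := Finset.mem_inter.mp hx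
  have hDU : A ∆ B ⊆ A ∪ B := symmDiff_le_sup
  have hSU : S ⊆ A ∪ B := hSAB.subset.trans hDU
  have hxS : x ∉ S := fun h ↦ by
    rcases Finset.mem_symmDiff.mp (hSAB.subset h) with h' | h'
    exacts [h'.2 hxB, h'.2 hxA]
  have pick := fun Z (hZ : Z ⊆ A ∪ B) ↦ hI.exists_mem_notMem_of_sum_eq_zero hf
    ((Finset.coe_subset.mpr hZ).trans (by rw [Finset.coe_union]; exact union_subset hAE hBE))
  -- `a ∉ I` lies in `S` and `b ∉ I` outside it; a third zero-sum set avoids both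
  obtain ⟨a, haS, haI⟩ := pick S hSU hSne hS
  obtain ⟨b, hb, hbI⟩ := pick (A ∆ B \ S) (Finset.sdiff_subset.trans hDU)
    (Finset.sdiff_nonempty.mpr hSAB.not_subset)
    (by rw [Finset.sum_sdiff_eq_sub hSAB.subset, Finset.sum_symmDiff_eq_add, hA, hB, hS]; simp)
  obtain ⟨hbD, hbS⟩ := Finset.mem_sdiff.mp hb
  obtain ⟨Z, hZ, haZ, hbZ⟩ :=
    Finset.exists_notMem_notMem_of_subset_symmDiff hSAB.subset haS hbD hbS
  obtain ⟨hZU, hZne, hZsum⟩ : Z ⊆ A ∪ B ∧ Z.Nonempty ∧ ∑ y ∈ Z, f y = 0 := by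
    simp only [Set.mem_insert_iff, Set.mem_singleton_iff] at hZ
    rcases hZ with rfl | rfl | rfl | rfl
    · exact ⟨Finset.subset_union_left, ⟨x, hxA⟩, hA⟩
    · exact ⟨Finset.subset_union_right, ⟨x, hxB⟩, hB⟩
    · refine ⟨symmDiff_le_sup.trans (sup_le Finset.subset_union_left hSU), ⟨x, ?_⟩, ?_⟩
      · simp [Finset.mem_symmDiff, hxA, hxS]
      · rw [Finset.sum_symmDiff_eq_add, hA, hS, add_zero]
    · refine ⟨symmDiff_le_sup.trans (sup_le Finset.subset_union_right hSU), ⟨x, ?_⟩, ?_⟩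
      · simp [Finset.mem_symmDiff, hxB, hxS]
      · rw [Finset.sum_symmDiff_eq_add, hB, hS, add_zero]
  obtain ⟨c, hcZ, hcI⟩ := pick Z hZU hZne hZsum
  have habc : ({a, b, c} : Finset α).card = 3 := Finset.card_eq_three.mpr
    ⟨a, b, c, ne_of_mem_of_not_mem haS hbS, (ne_of_mem_of_not_mem hcZ haZ).symm,
      (ne_of_mem_of_not_mem hcZ hbZ).symm, rfl⟩
  refine habc ▸ Set.ncard_add_card_le_of_disjoint hIU ?_ ?_
  · simp only [Finset.insert_subset_iff, Finset.singleton_subset_iff]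
    exact ⟨hSU haS, hDU hbD, hZU hcZ⟩
  · simp only [Finset.coe_insert, Finset.coe_singleton, disjoint_insert_right,
      disjoint_singleton_right]
    exact ⟨haI, hbI, hcI⟩

theorem rk_union_add_three_le [DecidableEq α]
    (hf : ∀ I ⊆ M.E, M.Indep I ↔ LinearIndepOn (ZMod 2) f I) {A B S : Finset α}
    (hAE : ↑A ⊆ M.E) (hBE : ↑B ⊆ M.E) (hA : ∑ x ∈ A, f x = 0) (hB : ∑ x ∈ B, f x = 0)
    (hS : ∑ x ∈ S, f x = 0) (hSne : S.Nonempty) (hSAB : S ⊂ A ∆ B) {x : α} (hx : x ∈ A ∩ B) :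
    M.rk ↑(A ∪ B) + 3 ≤ (A ∪ B).card := by
  have hcount : ∀ I, M.Indep I → I ⊆ ↑(A ∪ B) → I.ncard + 3 ≤ (A ∪ B).card :=
    fun I hI hIU ↦ hI.ncard_add_three_le hf hIU hAE hBE hA hB hS hSne hSAB hx
  have hrk := rk_le_of_forall_indep (k := (A ∪ B).card - 3) fun I hI hIU ↦
    Nat.le_sub_of_add_le (hcount I hI hIU)
  have := hcount ∅ M.empty_indep (empty_subset _)
  omega

end Binary

end Matroid

theorem binary_symmDiff_circuit {α : Type*} (M : Matroid α) (hM : M.RepF2)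
    (C₁ C₂ : Set α) (h1 : M.Circuit' C₁) (h2 : M.Circuit' C₂) (hne : C₁ ≠ C₂)
    (hint : (C₁ ∩ C₂).Nonempty)
    (hmod : M.rk C₁ + M.rk C₂ = M.rk (C₁ ∪ C₂) + M.rk (C₁ ∩ C₂)) :
    M.Circuit' ((C₁ ∪ C₂) \ (C₁ ∩ C₂)) := by
  classical
  obtain ⟨ι, f, hf⟩ := hM
  obtain ⟨A, rfl, hA⟩ := h1.exists_finset_sum_eq_zero hf
  obtain ⟨B, rfl, hB⟩ := h2.exists_finset_sum_eq_zero hf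
  have hD : ((A : Set α) ∪ B) \ (A ∩ B) = ↑(A ∆ B) := by
    rw [Finset.coe_symmDiff, symmDiff_eq_sup_sdiff_inf]
    rfl
  have hDE : ↑(A ∆ B) ⊆ M.E := by
    rw [Finset.coe_symmDiff]
    exact symmDiff_le_sup.trans (union_subset h1.1 h2.1)
  have hDsum : ∑ x ∈ A ∆ B, f x = 0 := by rw [Finset.sum_symmDiff_eq_add, hA, hB, add_zero]
  have hDne : (A ∆ B).Nonempty :=
    Finset.nonempty_iff_ne_empty.mpr fun h ↦ hne (congrArg _ (symmDiff_eq_bot.mp h))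
  rw [hD]
  refine ⟨hDE, M.not_indep_of_sum_eq_zero hf hDE hDne hDsum, fun T hT ↦ by_contra fun hTdep ↦ ?_⟩
  obtain ⟨S, hST, hSne, hS⟩ := M.exists_sum_eq_zero_of_not_indep hf (hT.subset.trans hDE) hTdep
  obtain ⟨x, hx⟩ := hint
  have hSD : S ⊂ A ∆ B := Finset.coe_ssubset.mp (hST.trans_ssubset hT)
  have hnull := h1.rk_union_add_two_eq_ncard h2 hne A.finite_toSet B.finite_toSet hmod
  have hthree := M.rk_union_add_three_le hf h1.1 h2.1 hA hB hS hSne hSD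
    (Finset.mem_inter.mpr hx)
  rw [← Finset.coe_union, ncard_coe_finset] at hnull
  omega
end

section
/- Let M be a matroid and C₁*, …, Cₘ* distinct cocircuits whose corresponding hyperplanes form a cofree set. Then for each i there is a point x ∈ E contained in Cᵢ* but in none of the other Cⱼ* (j ≠ i). -/
open Set Function

/-- Injectivity makes the intersection over `j ≠ i` strictly larger than the one over all `j`;
a point of the difference is private to `i`. -/
theorem Set.exists_private_point_of_injective_inter_biInter {ι α : Type*} [Fintype ι]
    [DecidableEq ι] {E : Set α} {F : ι → Set α}
    (hinj : Injective fun I : Finset ι => E ∩ ⋂ i ∈ I, F i) (i : ι) :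
    ∃ x ∈ E, x ∉ F i ∧ ∀ j ≠ i, x ∈ F j := by
  have hne : E ∩ ⋂ j ∈ Finset.univ.erase i, F j ≠ E ∩ ⋂ j ∈ Finset.univ, F j :=
    fun h => Finset.univ.erase_ne_self.2 (Finset.mem_univ i) (hinj h)
  have hsplit : E ∩ ⋂ j ∈ Finset.univ, F j = (E ∩ ⋂ j ∈ Finset.univ.erase i, F j) ∩ F i := by
    conv_lhs => rw [← Finset.insert_erase (Finset.mem_univ i), Finset.set_biInter_insert]
    rw [inter_comm (F i), inter_assoc]
  rw [hsplit] at hne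
  obtain ⟨x, ⟨hxE, hxF⟩, hxi⟩ := not_subset.1 (mt inter_eq_left.2 hne.symm)
  simp only [mem_iInter, Finset.mem_erase] at hxF
  exact ⟨x, hxE, hxi, fun j hj => hxF j ⟨hj, Finset.mem_univ j⟩⟩

theorem cofree_cocircuits_private_point_general {α : Type*} (M : Matroid α) {m : ℕ}
    (H : Fin m → Set α) (hcf : M.IsCofreeSet H)
    (C : Fin m → Set α) (hC : ∀ i, C i = M.E \ H i) :
    ∀ i, ∃ x, x ∈ C i ∧ ∀ j, j ≠ i → x ∉ C j := by
  intro i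
  obtain ⟨x, hxE, hxi, hxH⟩ := Set.exists_private_point_of_injective_inter_biInter hcf.2.1 i
  refine ⟨x, hC i ▸ ⟨hxE, hxi⟩, fun j hj hxj => ?_⟩
  rw [hC j] at hxj
  exact hxj.2 (hxH j hj)

theorem cofree_cocircuits_private_point {α : Type*} (M : Matroid α) {m : ℕ}
    (H : Fin m → Set α) (hhyp : ∀ i, M.Hyperplane' (H i)) (hcf : M.IsCofreeSet H)
    (C : Fin m → Set α) (hC : ∀ i, C i = M.E \ H i) (hdist : Function.Injective C) :
    ∀ i, ∃ x, x ∈ C i ∧ ∀ j, j ≠ i → x ∉ C j :=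
  cofree_cocircuits_private_point_general M H hcf C hC
end

section
/- Let M be a matroid and C₁*, …, Cₘ* distinct cocircuits whose corresponding hyperplanes form a cofree set. Then all pairwise symmetric differences Cᵢ* △ Cⱼ* (i ≠ j) are distinct, so there are exactly m choose 2 of them. -/
open Set Function

/-!
Since the flats `H_i` lie in `E`, `C_i* △ C_j* = H_i △ H_j`. Cofreeness makes the meets
`⋂_{i ∈ I} H_i` pairwise distinct, so for `j ∉ I` some point of `⋂_{i ∈ I} H_i` avoids `H_j`.
If `{i, j} ≠ {k, l}`, say `j ∉ {k, l}`, a point of `H_i ∩ H_k ∩ H_l` outside `H_j` lies in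
`H_i △ H_j` but not in `H_k △ H_l`. Hence `{i, j} ↦ H_i △ H_j` is injective on unordered pairs.
-/

open scoped symmDiff

namespace Set

variable {α ι : Type*}

theorem diff_symmDiff_diff {E A B : Set α} (hA : A ⊆ E) (hB : B ⊆ E) :
    (E \ A) ∆ (E \ B) = A ∆ B := by
  ext x
  have := @hA x
  have := @hB x
  simp only [mem_symmDiff, mem_sdiff]
  tauto

theorem symmDiff_ne_symmDiff_of_mem {A B C D : Set α} {x : α} (hA : x ∈ A) (hB : x ∉ B)
    (hC : x ∈ C) (hD : x ∈ D) : A ∆ B ≠ C ∆ D := by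
  intro h
  have hx : x ∈ A ∆ B := Or.inl ⟨hA, hB⟩
  rw [h, mem_symmDiff] at hx
  tauto

def symmDiffOfSym2 (H : ι → Set α) : Sym2 ι → Set α :=
  Sym2.lift ⟨fun i j => H i ∆ H j, fun _ _ => symmDiff_comm _ _⟩

theorem injOn_symmDiffOfSym2 {H : ι → Set α}
    (hsep : ∀ (I : Finset ι) (j : ι), j ∉ I → ∃ x, (∀ i ∈ I, x ∈ H i) ∧ x ∉ H j) :
    InjOn (symmDiffOfSym2 H) Sym2.diagSetᶜ := by
  classical
  have key : ∀ i j k l, j ≠ i → j ≠ k → j ≠ l → H i ∆ H j ≠ H k ∆ H l := by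
    intro i j k l hji hjk hjl
    obtain ⟨x, hx, hxj⟩ := hsep {i, k, l} j (by simp [hji, hjk, hjl])
    exact symmDiff_ne_symmDiff_of_mem (hx i (by simp)) hxj (hx k (by simp)) (hx l (by simp))
  rintro ⟨i, j⟩ hij ⟨k, l⟩ hkl heq
  simp only [mem_compl_iff, Sym2.mem_diagSet, Sym2.mk_isDiag_iff] at hij hkl
  change H i ∆ H j = H k ∆ H l at heq
  by_contra hne
  rw [Sym2.eq_iff] at hne
  by_cases hj : j ≠ k ∧ j ≠ l
  · exact key i j k l (Ne.symm hij) hj.1 hj.2 heq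
  · refine key j i k l hij ?_ ?_ (by rwa [symmDiff_comm])
    all_goals grind

theorem ncard_setOf_symmDiff_eq_choose {H : ι → Set α}
    (hsep : ∀ (I : Finset ι) (j : ι), j ∉ I → ∃ x, (∀ i ∈ I, x ∈ H i) ∧ x ∉ H j) :
    {S | ∃ i j, i ≠ j ∧ S = H i ∆ H j}.ncard = (Nat.card ι).choose 2 := by
  have himage : {S | ∃ i j, i ≠ j ∧ S = H i ∆ H j} = symmDiffOfSym2 H '' Sym2.diagSetᶜ := by
    ext S
    constructor
    · rintro ⟨i, j, hij, rfl⟩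
      exact ⟨s(i, j), by simpa using hij, rfl⟩
    · rintro ⟨⟨i, j⟩, hij, rfl⟩
      exact ⟨i, j, by simpa using hij, rfl⟩
  rw [himage, (injOn_symmDiffOfSym2 hsep).ncard_image, Sym2.ncard_diagSet_compl]

end Set

namespace Matroid

variable {α : Type*}

theorem IsCofreeSet.exists_mem_notMem {M : Matroid α} {m : ℕ} {F : Fin m → Set α}
    (hF : M.IsCofreeSet F) {I : Finset (Fin m)} {j : Fin m} (hj : j ∉ I) :
    ∃ x, (∀ i ∈ I, x ∈ F i) ∧ x ∉ F j := by
  by_contra! hsub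
  refine Finset.insert_ne_self.2 hj (hF.2.1 ?_)
  ext x
  simp only [Finset.set_biInter_insert, mem_inter_iff, mem_iInter]
  constructor
  · exact fun h => ⟨h.1, h.2.2⟩
  · exact fun h => ⟨h.1, hsub x h.2, h.2⟩

end Matroid

theorem cofree_symmDiffs_distinct_general {α : Type*} (M : Matroid α) {m : ℕ}
    (H : Fin m → Set α) (hcf : M.IsCofreeSet H)
    (C : Fin m → Set α) (hC : ∀ i, C i = M.E \ H i) :
    {S : Set α | ∃ i j : Fin m, i ≠ j ∧ S = (C i ∪ C j) \ (C i ∩ C j)}.ncard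
      = m.choose 2 := by
  have hCH : ∀ i j, (C i ∪ C j) \ (C i ∩ C j) = H i ∆ H j := fun i j => by
    rw [← Set.diff_symmDiff_diff (hcf.1 i).subset_ground (hcf.1 j).subset_ground,
      ← hC, ← hC]
    exact (symmDiff_eq_sup_sdiff_inf _ _).symm
  simp_rw [hCH]
  rw [Set.ncard_setOf_symmDiff_eq_choose fun _ _ hj => hcf.exists_mem_notMem hj,
    Nat.card_eq_fintype_card, Fintype.card_fin]

theorem cofree_symmDiffs_distinct {α : Type*} (M : Matroid α) {m : ℕ}
    (H : Fin m → Set α) (hhyp : ∀ i, M.Hyperplane' (H i)) (hcf : M.IsCofreeSet H)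
    (C : Fin m → Set α) (hC : ∀ i, C i = M.E \ H i) (hdist : Function.Injective C) :
    {S : Set α | ∃ i j : Fin m, i ≠ j ∧ S = (C i ∪ C j) \ (C i ∩ C j)}.ncard
      = m.choose 2 :=
  cofree_symmDiffs_distinct_general M H hcf C hC
end

section
/- Let M be a matroid and let H₁, …, Hₘ be a cofree set of hyperplanes generated by a basis B = {x₁, …, xₘ} of M / (⊓ⱼ Hⱼ). Then for every flat F in the sublattice ⟨H₁, …, Hₘ⟩ and every index set I ⊆ {1, …, m}: F = ⊓_{i ∈ I} Hᵢ if and only if F = σ((⊓ⱼ Hⱼ) ∪ {xᵢ : i ∉ I}). -/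
open Set Function

/-!
Since `B` is a basis of `M ／ F₀`, the set `F₀ ∪ B` spans `M`. Each `Hⱼ` is a flat containing `F₀`
and every `xᵢ` with `i ≠ j`, but not `xⱼ` (otherwise `Hⱼ` would be spanned by `F₀ ∪ B`). For such a
flat the exchange axiom gives `cl (insert xⱼ Y) ∩ Hⱼ = cl Y` whenever `Y ⊆ Hⱼ`, so intersecting with
the `Hᵢ`, `i ∈ I`, one at a time removes exactly the `xᵢ`, `i ∈ I`, from the spanning set:
`E ∩ ⋂_{i ∈ I} Hᵢ = cl (F₀ ∪ {xᵢ : i ∉ I})` for every `I`.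
-/

namespace Matroid

variable {α : Type*} {M : Matroid α}

lemma contract'_eq_contract (M : Matroid α) (C : Set α) : M.contract' C = M ／ C := rfl

lemma closure_union_eq_ground_of_contract_isBase {B C : Set α} (hB : (M ／ C).IsBase B) :
    M.closure (B ∪ C) = M.E := by
  have hcl := hB.closure_eq
  rw [contract_closure_eq, contract_ground] at hcl
  refine (M.closure_subset_ground _).antisymm fun e he ↦ ?_
  by_cases heC : e ∈ C
  · exact M.mem_closure_of_mem' (.inr heC) he
  · exact (hcl.symm ▸ ⟨he, heC⟩ : e ∈ M.closure (B ∪ C) \ C).1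

lemma IsFlat.closure_insert_inter_eq {F X : Set α} {e : α} (hF : M.IsFlat F) (hXF : X ⊆ F)
    (heF : e ∉ F) : M.closure (insert e X) ∩ F = M.closure X := by
  have hclF {Y : Set α} (hYF : Y ⊆ F) : M.closure Y ⊆ F :=
    (M.closure_subset_closure hYF).trans hF.closure.subset
  refine subset_antisymm ?_
    (subset_inter (M.closure_subset_closure (subset_insert _ _)) (hclF hXF))
  rintro y ⟨hyX, hyF⟩
  by_contra hy
  -- exchange: `e` would lie in the closure of `insert y X ⊆ F`
  exact heF (hclF (insert_subset hyF hXF) (closure_exchange ⟨hyX, hy⟩).1)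

lemma notMem_closure_union_range_diff {ι : Type*} {X : Set α} {x : ι → α} (i : ι)
    (hspan : M.closure (X ∪ range x) = M.E) (hne : M.closure (X ∪ (range x \ {x i})) ≠ M.E) :
    x i ∉ M.closure (X ∪ (range x \ {x i})) := by
  intro h
  rw [← closure_insert_eq_of_mem_closure h, ← union_insert, insert_sdiff_singleton,
    insert_eq_of_mem (mem_range_self i)] at hne
  exact hne hspan

lemma inter_biInter_eq_closure_union_image_compl {ι : Type*} {X : Set α} {x : ι → α}
    {H : ι → Set α} (hH : ∀ i, M.IsFlat (H i)) (hXH : ∀ i, X ⊆ H i)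
    (hxH : ∀ i j, j ≠ i → x j ∈ H i) (hxnH : ∀ i, x i ∉ H i)
    (hspan : M.closure (X ∪ range x) = M.E) (I : Finset ι) :
    M.E ∩ ⋂ i ∈ I, H i = M.closure (X ∪ x '' {i | i ∉ I}) := by
  classical
  induction I using Finset.induction_on with
  | empty => simpa using hspan.symm
  | insert j I hj ih =>
    have hcompl : {i | i ∉ I} = insert j {i | i ∉ insert j I} := by
      ext i; by_cases hij : i = j <;> simp [hij, hj]
    have hsub : X ∪ x '' {i | i ∉ insert j I} ⊆ H j := union_subset (hXH j) <| by
      rintro _ ⟨i, hi, rfl⟩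
      exact hxH j i (by simp_all)
    rw [Finset.set_biInter_insert, inter_left_comm, inter_comm, ih, hcompl, image_insert_eq,
      union_insert, (hH j).closure_insert_inter_eq hsub (hxnH j)]

end Matroid

theorem generated_flats_characterization_general {α : Type*} (M : Matroid α) {m : ℕ}
    (H : Fin m → Set α) (hhyp : ∀ i, M.Hyperplane' (H i))
    (F₀ : Set α) (hF₀ : F₀ = M.E ∩ ⋂ j, H j)
    (x : Fin m → α) (hinj : Function.Injective x)
    (hbase : (M.contract' F₀).IsBase (Set.range x))
    (hgen : ∀ i, M.closure (F₀ ∪ (Set.range x \ {x i})) = H i) :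
    ∀ F : Set α, (∃ J : Finset (Fin m), F = M.E ∩ ⋂ i ∈ J, H i) →
      ∀ I : Finset (Fin m),
        (F = M.E ∩ ⋂ i ∈ I, H i ↔ F = M.closure (F₀ ∪ x '' {i | i ∉ I})) := by
  rw [Matroid.contract'_eq_contract] at hbase
  have hspan : M.closure (F₀ ∪ range x) = M.E := by
    rw [union_comm]; exact Matroid.closure_union_eq_ground_of_contract_isBase hbase
  have hground : F₀ ∪ range x ⊆ M.E :=
    union_subset (hF₀ ▸ inter_subset_left) (hbase.subset_ground.trans sdiff_subset)
  have hsub (i : Fin m) : F₀ ∪ (range x \ {x i}) ⊆ H i :=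
    hgen i ▸ M.subset_closure _ ((union_subset_union_right _ sdiff_subset).trans hground)
  have hxnH (i : Fin m) : x i ∉ H i :=
    hgen i ▸ Matroid.notMem_closure_union_range_diff i hspan (hgen i ▸ (hhyp i).2.1)
  have hxH (i j : Fin m) (hji : j ≠ i) : x j ∈ H i :=
    hsub i (.inr ⟨mem_range_self j, hinj.ne hji⟩)
  intro F _ I
  rw [Matroid.inter_biInter_eq_closure_union_image_compl (fun i ↦ (hhyp i).1)
    (fun i ↦ subset_union_left.trans (hsub i)) hxH hxnH hspan I]

theorem generated_flats_characterization {α : Type*} (M : Matroid α) {m : ℕ}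
    (H : Fin m → Set α) (hhyp : ∀ i, M.Hyperplane' (H i)) (hcf : M.IsCofreeSet H)
    (F₀ : Set α) (hF₀ : F₀ = M.E ∩ ⋂ j, H j)
    (x : Fin m → α) (hinj : Function.Injective x)
    (hbase : (M.contract' F₀).IsBase (Set.range x))
    (hgen : ∀ i, M.closure (F₀ ∪ (Set.range x \ {x i})) = H i) :
    ∀ F : Set α, (∃ J : Finset (Fin m), F = M.E ∩ ⋂ i ∈ J, H i) →
      ∀ I : Finset (Fin m),
        (F = M.E ∩ ⋂ i ∈ I, H i ↔ F = M.closure (F₀ ∪ x '' {i | i ∉ I})) :=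
  generated_flats_characterization_general M H hhyp F₀ hF₀ x hinj hbase hgen
end

section
/- Let M be a matroid of rank r with injective weight function w. If X is a basis of M such that every element of X is the minimum-weight element of some cocircuit of M, then X is the unique minimum-weight basis of M. -/
open Set Function

/-!
If `B ≠ X` is a base, pick `x ∈ X \ B` and a cocircuit `K` in which `x` is the lightest
element. The fundamental circuit of `x` with respect to `B` meets `K` in `x` and, since a circuit
never meets a cocircuit in a single element, in some `y ∈ B ∩ K` as well; swapping `y` for `x` is
a base exchange that strictly lowers the weight. As there are finitely many bases, a lightest base
exists, it cannot differ from `X`, and every other base is strictly heavier than some base, hence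
than `X`.
-/

open Set Function

theorem finsum_mem_insert_sdiff_singleton_add {α M : Type*} [AddCommMonoid M] {f : α → M}
    {s : Set α} {a b : α} (hs : s.Finite) (ha : a ∉ s) (hb : b ∈ s) :
    ∑ᶠ i ∈ insert a s \ {b}, f i + f b = f a + ∑ᶠ i ∈ s, f i := by
  have hb' : b ∈ insert a s := mem_insert_of_mem a hb
  rw [add_comm,
    ← finsum_mem_insert (s := insert a s \ {b}) f (fun h => h.2 rfl) (hs.insert a).sdiff,
    insert_sdiff_singleton, insert_eq_of_mem hb', finsum_mem_insert f ha hs]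

namespace Matroid

variable {α : Type*} {M : Matroid α}

theorem circuit'_iff_isCircuit {C : Set α} : M.Circuit' C ↔ M.IsCircuit C := by
  rw [isCircuit_iff_forall_ssubset, dep_iff, Circuit']
  tauto

theorem cocircuit'_iff_isCocircuit {K : Set α} : M.Cocircuit' K ↔ M.IsCocircuit K :=
  circuit'_iff_isCircuit

theorem IsBase.exists_exchange_of_mem_isCocircuit {B K : Set α} {e : α} (hB : M.IsBase B)
    (hK : M.IsCocircuit K) (heK : e ∈ K) (heB : e ∉ B) :
    ∃ f ∈ B ∩ K, M.IsBase (insert e B \ {f}) := by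
  have hC := hB.fundCircuit_isCircuit (hK.subset_ground heK) heB
  obtain ⟨f, ⟨hfC, hfK⟩, hfe⟩ :=
    (hC.isCocircuit_inter_nontrivial hK ⟨e, M.mem_fundCircuit e B, heK⟩).exists_ne e
  have hfB : f ∈ B := (mem_insert_iff.1 (M.fundCircuit_subset_insert e B hfC)).resolve_left hfe
  refine ⟨f, ⟨hfB, hfK⟩, hB.exchange_isBase_of_indep' hfB heB ?_⟩
  have heB_cl : e ∈ M.closure B := by rw [hB.closure_eq]; exact hK.subset_ground heK
  exact (hB.indep.mem_fundCircuit_iff heB_cl heB).1 hfC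

theorem IsBase.exists_isBase_finsum_lt_of_ne [M.Finite] {w : α → ℝ} {X B : Set α}
    (hB : M.IsBase B) (hw : Injective w) (hX : M.IsBase X)
    (hloc : ∀ x ∈ X, ∃ K, M.IsCocircuit K ∧ IsMinWt w K x) (hBX : B ≠ X) :
    ∃ B', M.IsBase B' ∧ ∑ᶠ a ∈ B', w a < ∑ᶠ a ∈ B, w a := by
  obtain ⟨x, hxX, hxB⟩ := not_subset.1 fun hXB => hBX (hX.eq_of_subset_isBase hB hXB).symm
  obtain ⟨K, hK, hxK, hxmin⟩ := hloc x hxX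
  obtain ⟨y, ⟨hyB, hyK⟩, hB'⟩ := hB.exists_exchange_of_mem_isCocircuit hK hxK hxB
  have hxy : w x < w y := (hxmin y hyK).lt_of_ne (hw.ne (ne_of_mem_of_not_mem hyB hxB).symm)
  have hsum := finsum_mem_insert_sdiff_singleton_add (f := w) hB.finite hxB hyB
  exact ⟨_, hB', by linarith⟩

end Matroid

theorem boruvka_optimality_certificate {α : Type*} (M : Matroid α) [M.Finite]
    (w : α → ℝ) (hw : Function.Injective w) (X : Set α) (hX : M.IsBase X)
    (hloc : ∀ x ∈ X, ∃ C, M.Cocircuit' C ∧ Matroid.IsMinWt w C x) :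
    ∀ B, M.IsBase B → B ≠ X → ∑ᶠ x ∈ X, w x < ∑ᶠ x ∈ B, w x := by
  have hloc' : ∀ x ∈ X, ∃ K, M.IsCocircuit K ∧ Matroid.IsMinWt w K x := fun x hx =>
    (hloc x hx).imp fun _ hK => ⟨Matroid.cocircuit'_iff_isCocircuit.1 hK.1, hK.2⟩
  have hdescent : ∀ B, M.IsBase B → B ≠ X → ∃ B', M.IsBase B' ∧ ∑ᶠ x ∈ B', w x < ∑ᶠ x ∈ B, w x :=
    fun _ hB => hB.exists_isBase_finsum_lt_of_ne hw hX hloc'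
  have hfin : Set.Finite {B | M.IsBase B} :=
    M.ground_finite.finite_subsets.subset fun _ hB => hB.subset_ground
  obtain ⟨B₀, hB₀, hmin⟩ := Set.exists_min_image _ (fun B => ∑ᶠ x ∈ B, w x) hfin ⟨X, hX⟩
  have hB₀X : B₀ = X := by
    by_contra hne
    obtain ⟨B', hB', hlt⟩ := hdescent B₀ hB₀ hne
    exact (hmin B' hB').not_gt hlt
  intro B hB hBX
  obtain ⟨B', hB', hlt⟩ := hdescent B hB hBX
  exact hB₀X ▸ (hmin B' hB').trans_lt hlt
end
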